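/- (Lemma 9, 'child exists'.) In the canonical model M(T₀,F₀), for any world w ∈ W, any datasets U, T, X ⊆ V, and any formula φ ∈ Φ such that [U]B^T_X φ ∉ F(w), there exists a world w' ∈ W such that w ∼_{U∪X} w', T ⊆ 𝒯_{w'}, and [U]φ ∉ F(w'). -/

import Mathlib

/-- Formulas of the Dynamic Logic of Trust-Based Beliefs over data variables `V`
and atomic propositions `A`:  p | ¬φ | φ→φ | B^T_X φ | [X]φ. -/
inductive Formula (V A : Type) : Type
  | atom : A → Formula V A
  | neg  : Formula V A → Formula V A
  | imp  : Formula V A → Formula V A → Formula V A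
  | bel  : Set V → Set V → Formula V A → Formula V A   -- `bel T X φ` is B^T_X φ
  | ann  : Set V → Formula V A → Formula V A           -- `ann X φ` is [X]φ

/-- A trustworthiness model `(W, {∼ₓ}, {𝒯_w}, π)`. -/
structure TModel (V A : Type) where
  W : Type
  sim : V → W → W → Prop
  sim_equiv : ∀ x : V, Equivalence (sim x)
  trust : W → Set V
  pi : A → Set (W × Set V)

namespace TModel

variable {V A : Type} (M : TModel V A)

/-- `w ∼_X u` iff `w ∼ₓ u` for each `x ∈ X`. -/
def simSet (X : Set V) (w u : M.W) : Prop := ∀ x ∈ X, M.sim x w u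

/-- The satisfaction relation `w,U ⊩ φ`. -/
def Sat : Formula V A → M.W → Set V → Prop
  | .atom p, w, U => (w, U) ∈ M.pi p
  | .neg φ, w, U => ¬ Sat φ w U
  | .imp φ ψ, w, U => Sat φ w U → Sat ψ w U
  | .bel T X φ, w, U => ∀ w' : M.W, M.simSet (X ∪ U) w w' → T ⊆ M.trust w' → Sat φ w' U
  | .ann X φ, w, U => Sat φ w (U ∪ X)

end TModel
/-- `φ ∧ ψ`, defined through `¬` and `→` in the usual way. -/
def Formula.conj {V A : Type} (φ ψ : Formula V A) : Formula V A :=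
  .neg (.imp φ (.neg ψ))

/-- `φ ↔ ψ`, defined through `¬` and `→` in the usual way. -/
def Formula.iff {V A : Type} (φ ψ : Formula V A) : Formula V A :=
  Formula.conj (.imp φ ψ) (.imp ψ φ)

/-- Propositional tautologies in the language `Φ`: formulas true under every
assignment of truth values to formulas respecting `¬` and `→`. -/
def Tautology {V A : Type} (φ : Formula V A) : Prop :=
  ∀ v : Formula V A → Prop,
    (∀ ψ, v (.neg ψ) ↔ ¬ v ψ) →
    (∀ ψ χ, v (.imp ψ χ) ↔ (v ψ → v χ)) →
    v φ

/-- Theorems of the Dynamic Logic of Trust-Based Beliefs: `⊢ φ`. -/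
inductive Prv {V A : Type} : Formula V A → Prop
  | taut {φ : Formula V A} : Tautology φ → Prv φ
  | truth (X : Set V) (φ : Formula V A) : Prv (.imp (.bel ∅ X φ) φ)
  | distB (T X : Set V) (φ ψ : Formula V A) :
      Prv (.imp (.bel T X (.imp φ ψ)) (.imp (.bel T X φ) (.bel T X ψ)))
  | distA (X : Set V) (φ ψ : Formula V A) :
      Prv (.imp (.ann X (.imp φ ψ)) (.imp (.ann X φ) (.ann X ψ)))
  | negIntro (T X : Set V) (φ : Formula V A) :
      Prv (.imp (.neg (.bel T X φ)) (.bel ∅ X (.neg (.bel T X φ))))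
  | mono {T T' X X' : Set V} (φ : Formula V A) :
      T ⊆ T' → X ⊆ X' → Prv (.imp (.bel T X φ) (.bel T' X' φ))
  | trust (T X Y : Set V) (φ : Formula V A) : Prv (.bel T X (.imp (.bel T Y φ) φ))
  | comb (X Y : Set V) (φ : Formula V A) :
      Prv (Formula.iff (.ann X (.ann Y φ)) (.ann (X ∪ Y) φ))
  | comm (T X Y : Set V) (φ : Formula V A) :
      Prv (Formula.iff (.ann Y (.bel T X φ)) (.bel T (Y ∪ X) (.ann Y φ)))
  | dual (X : Set V) (φ : Formula V A) :
      Prv (Formula.iff (.neg (.ann X φ)) (.ann X (.neg φ)))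
  | empty (φ : Formula V A) : Prv (Formula.iff (.ann ∅ φ) φ)
  | mp {φ ψ : Formula V A} : Prv (.imp φ ψ) → Prv φ → Prv ψ
  | necB (T X : Set V) {φ : Formula V A} : Prv φ → Prv (.bel T X φ)
  | necA (X : Set V) {φ : Formula V A} : Prv φ → Prv (.ann X φ)

/-- `F ⊢ φ`: φ is derivable from theorems of the system and the set of
additional assumptions `F` using the Modus Ponens inference rule only. -/
inductive Deriv {V A : Type} (F : Set (Formula V A)) : Formula V A → Prop
  | thm {φ : Formula V A} : Prv φ → Deriv F φ
  | hyp {φ : Formula V A} : φ ∈ F → Deriv F φ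
  | mp {φ ψ : Formula V A} : Deriv F (.imp φ ψ) → Deriv F φ → Deriv F ψ

/-- A set of formulas is consistent if no formula and its negation are both derivable. -/
def Consistent {V A : Type} (F : Set (Formula V A)) : Prop :=
  ¬ ∃ φ : Formula V A, Deriv F φ ∧ Deriv F (.neg φ)

/-- A maximal consistent set: a consistent set not properly contained in any consistent set. -/
def MaxConsistent {V A : Type} (F : Set (Formula V A)) : Prop :=
  Consistent F ∧ ∀ G : Set (Formula V A), F ⊆ G → Consistent G → G = F
/-- A triple `(Xᵢ, Tᵢ, Fᵢ)` labelling one step of a canonical-model world. -/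
abbrev Triple (V A : Type) := Set V × Set V × Set (Formula V A)

/-- Condition on a node labelled `T, F` of the canonical tree: `F` is a maximal
consistent set and `B^T_Y φ → φ ∈ F` for every dataset `Y` and formula `φ`. -/
def NodeOk {V A : Type} (T : Set V) (F : Set (Formula V A)) : Prop :=
  MaxConsistent F ∧ ∀ (Y : Set V) (φ : Formula V A), Formula.imp (.bel T Y φ) φ ∈ F

/-- `T(w)`: the last dataset `Tₙ` of the world `w` (worlds are written as lists of
triples with the most recent triple first; the empty list is the root `T₀, F₀`). -/
def worldT {V A : Type} (T₀ : Set V) : List (Triple V A) → Set V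
  | [] => T₀
  | (_, T, _) :: _ => T

/-- `F(w)`: the last set of formulas `Fₙ` of the world `w`. -/
def worldF {V A : Type} (F₀ : Set (Formula V A)) : List (Triple V A) → Set (Formula V A)
  | [] => F₀
  | (_, _, F) :: _ => F

/-- Worlds of the canonical model `M(T₀,F₀)`: sequences
`T₀,F₀,X₁,T₁,F₁,…,Xₙ,Tₙ,Fₙ` such that each `Fᵢ` is a maximal consistent set with
(a) `ψ ∈ Fᵢ` whenever `B^∅_{Xᵢ} ψ ∈ F_{i-1}` (for `i > 0`), and
(b) `B^{Tᵢ}_Y φ → φ ∈ Fᵢ` for every dataset `Y` and formula `φ`. -/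
def IsWorld {V A : Type} (T₀ : Set V) (F₀ : Set (Formula V A)) :
    List (Triple V A) → Prop
  | [] => NodeOk T₀ F₀
  | (X, T, F) :: rest =>
      IsWorld T₀ F₀ rest ∧ NodeOk T F ∧
        ∀ ψ : Formula V A, Formula.bel ∅ X ψ ∈ worldF F₀ rest → ψ ∈ F

/-- `u ∼ₓ v` in the canonical model: every edge along the unique simple path in the
tree between `u` and `v` is labelled with the variable `x`; equivalently, `u` and `v`
have a common ancestor `c` such that every edge between `c` and `u` and every edge
between `c` and `v` is labelled with `x`. -/
def csim {V A : Type} (x : V) (u v : List (Triple V A)) : Prop :=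
  ∃ c d₁ d₂ : List (Triple V A),
    u = d₁ ++ c ∧ v = d₂ ++ c ∧ (∀ t ∈ d₁, x ∈ t.1) ∧ (∀ t ∈ d₂, x ∈ t.1)

/-!
The child `w'` is `w` extended by one edge labelled `U ∪ X`, whose node carries the dataset `T`
and a maximal consistent extension of
`{ψ | B^∅_{U∪X} ψ ∈ F(w)} ∪ {B^T_Y χ → χ | Y, χ} ∪ {¬[U]φ}`.
This set is consistent: otherwise the first two parts derive `[U]φ`, and pushing that derivation
under `B^T_{U∪X}` (necessitation, Distributivity, Monotonicity from `∅` to `T`, and the Trust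
axiom for the second part) puts `B^T_{U∪X}[U]φ` into `F(w)`, which by Commutativity is
`[U]B^T_X φ`.
-/

section

variable {V A : Type}

namespace Prv

theorem imp_self (φ : Formula V A) : Prv (.imp φ φ) :=
  .taut fun _ _ hi => by simp only [hi]; tauto

theorem imp_intro (φ ψ : Formula V A) : Prv (.imp ψ (.imp φ ψ)) :=
  .taut fun _ _ hi => by simp only [hi]; tauto

theorem imp_distrib (φ χ ψ : Formula V A) :
    Prv (.imp (.imp φ (.imp χ ψ)) (.imp (.imp φ χ) (.imp φ ψ))) :=
  .taut fun _ _ hi => by simp only [hi]; tauto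

theorem by_contradiction (φ χ : Formula V A) :
    Prv (.imp (.imp (.neg φ) χ) (.imp (.imp (.neg φ) (.neg χ)) φ)) :=
  .taut fun _ hn hi => by simp only [hn, hi]; tauto

theorem iff_mpr (φ ψ : Formula V A) : Prv (.imp (Formula.iff φ ψ) (.imp ψ φ)) :=
  .taut fun _ hn hi => by simp only [Formula.iff, Formula.conj, hn, hi]; tauto

end Prv

namespace Deriv

variable {F G : Set (Formula V A)} {φ ψ : Formula V A}

theorem mono (hFG : F ⊆ G) (d : Deriv F φ) : Deriv G φ := by
  induction d with
  | thm h => exact .thm h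
  | hyp h => exact .hyp (hFG h)
  | mp _ _ ih₁ ih₂ => exact .mp ih₁ ih₂

theorem deduction (d : Deriv (insert φ F) ψ) : Deriv F (.imp φ ψ) := by
  induction d with
  | thm h => exact .mp (.thm (Prv.imp_intro _ _)) (.thm h)
  | hyp h =>
    rcases h with rfl | h
    · exact .thm (Prv.imp_self _)
    · exact .mp (.thm (Prv.imp_intro _ _)) (.hyp h)
  | mp _ _ ih₁ ih₂ => exact .mp (.mp (.thm (Prv.imp_distrib _ _ _)) ih₁) ih₂

theorem of_not_consistent_insert_neg (h : ¬ Consistent (insert (.neg φ) F)) : Deriv F φ := by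
  obtain ⟨χ, d₁, d₂⟩ := not_not.mp h
  exact .mp (.mp (.thm (Prv.by_contradiction _ _)) d₁.deduction) d₂.deduction

theorem exists_superset_of_sUnion {c : Set (Set (Formula V A))} (hc : IsChain (· ⊆ ·) c)
    {s₀ : Set (Formula V A)} (hs₀ : s₀ ∈ c) (d : Deriv (⋃₀ c) φ) :
    ∃ s ∈ c, s₀ ⊆ s ∧ Deriv s φ := by
  induction d generalizing s₀ with
  | thm h => exact ⟨s₀, hs₀, subset_rfl, .thm h⟩
  | hyp h =>
    obtain ⟨t, ht, hφt⟩ := h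
    rcases hc.total hs₀ ht with hs₀t | hts₀
    · exact ⟨t, ht, hs₀t, .hyp hφt⟩
    · exact ⟨s₀, hs₀, subset_rfl, .hyp (hts₀ hφt)⟩
  | mp _ _ ih₁ ih₂ =>
    obtain ⟨s₁, hs₁, hs₀s₁, d₁⟩ := ih₁ hs₀
    obtain ⟨s₂, hs₂, hs₁s₂, d₂⟩ := ih₂ hs₁
    exact ⟨s₂, hs₂, hs₀s₁.trans hs₁s₂, .mp (d₁.mono hs₁s₂) d₂⟩

end Deriv

theorem Consistent.sUnion_of_isChain {c : Set (Set (Formula V A))}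
    (hcons : ∀ s ∈ c, Consistent s) (hc : IsChain (· ⊆ ·) c) (hne : c.Nonempty) :
    Consistent (⋃₀ c) := by
  rintro ⟨χ, d₁, d₂⟩
  obtain ⟨s₁, hs₁, -, d₁⟩ := d₁.exists_superset_of_sUnion hc hne.some_mem
  obtain ⟨s₂, hs₂, hs₁s₂, d₂⟩ := d₂.exists_superset_of_sUnion hc hs₁
  exact hcons s₂ hs₂ ⟨χ, d₁.mono hs₁s₂, d₂⟩

theorem Consistent.exists_maxConsistent_superset {G : Set (Formula V A)} (hG : Consistent G) :
    ∃ F, G ⊆ F ∧ MaxConsistent F := by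
  obtain ⟨F, hGF, hF⟩ := zorn_subset_nonempty {F | Consistent F}
    (fun c hcS hc hne => ⟨⋃₀ c, Consistent.sUnion_of_isChain hcS hc hne,
      fun _ => Set.subset_sUnion_of_mem⟩) G hG
  exact ⟨F, hGF, hF.1, fun H hFH hH => (hF.2 hH hFH).antisymm hFH⟩

namespace MaxConsistent

variable {F : Set (Formula V A)} {φ ψ : Formula V A}

theorem mem_of_deriv (hF : MaxConsistent F) (d : Deriv F φ) : φ ∈ F := by
  by_contra hφ
  have hcons : Consistent (insert φ F) := by
    rintro ⟨χ, d₁, d₂⟩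
    exact hF.1 ⟨χ, .mp d₁.deduction d, .mp d₂.deduction d⟩
  exact hφ (hF.2 _ (Set.subset_insert _ _) hcons ▸ Set.mem_insert φ F)

theorem mem_of_prv_imp (hF : MaxConsistent F) (himp : Prv (.imp φ ψ)) (hφ : φ ∈ F) :
    ψ ∈ F :=
  hF.mem_of_deriv (.mp (.thm himp) (.hyp hφ))

theorem not_mem_of_neg_mem (hF : MaxConsistent F) (h : Formula.neg φ ∈ F) : φ ∉ F :=
  fun hφ => hF.1 ⟨φ, .hyp hφ, .hyp h⟩

end MaxConsistent

theorem IsWorld.maxConsistent {T₀ : Set V} {F₀ : Set (Formula V A)} {w : List (Triple V A)}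
    (hw : IsWorld T₀ F₀ w) : MaxConsistent (worldF F₀ w) := by
  match w, hw with
  | [], hw => exact hw.1
  | (_, _, _) :: _, hw => exact hw.2.1.1

/-- Conditions (a) and (b) on a child, carrying the dataset `T`, of a node with formulas `F`
along an edge labelled `Y`. -/
def childBase (F : Set (Formula V A)) (Y T : Set V) : Set (Formula V A) :=
  {ψ | Formula.bel ∅ Y ψ ∈ F} ∪
    Set.range fun p : Set V × Formula V A => .imp (.bel T p.1 p.2) p.2

theorem Deriv.bel_of_childBase {F : Set (Formula V A)} {Y T : Set V} {ψ : Formula V A}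
    (d : Deriv (childBase F Y T) ψ) : Deriv F (.bel T Y ψ) := by
  induction d with
  | thm h => exact .thm (.necB _ _ h)
  | hyp h =>
    rcases h with h | ⟨⟨Z, χ⟩, rfl⟩
    · exact .mp (.thm (.mono _ (Set.empty_subset T) subset_rfl)) (.hyp h)
    · exact .thm (.trust T Y Z χ)
  | mp _ _ ih₁ ih₂ => exact .mp (.mp (.thm (.distB _ _ _ _)) ih₁) ih₂

theorem exists_child {T₀ : Set V} {F₀ : Set (Formula V A)} {w : List (Triple V A)}
    (hw : IsWorld T₀ F₀ w) {Y T : Set V} {ψ : Formula V A}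
    (hψ : Formula.bel T Y ψ ∉ worldF F₀ w) :
    ∃ F, IsWorld T₀ F₀ ((Y, T, F) :: w) ∧ ψ ∉ F := by
  have hcons : Consistent (insert (.neg ψ) (childBase (worldF F₀ w) Y T)) := fun hincons =>
    have d := Deriv.of_not_consistent_insert_neg (not_not_intro hincons)
    hψ (hw.maxConsistent.mem_of_deriv d.bel_of_childBase)
  obtain ⟨F, hsub, hF⟩ := hcons.exists_maxConsistent_superset
  have hnode : NodeOk T F := ⟨hF, fun Z χ => hsub (.inr (.inr ⟨(Z, χ), rfl⟩))⟩
  exact ⟨F, ⟨hw, hnode, fun χ hχ => hsub (.inr (.inl hχ))⟩,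
    hF.not_mem_of_neg_mem (hsub (.inl rfl))⟩

theorem csim_cons_self {x : V} {Y T : Set V} {F : Set (Formula V A)} (hx : x ∈ Y)
    (w : List (Triple V A)) : csim x w ((Y, T, F) :: w) :=
  ⟨w, [], [(Y, T, F)], rfl, rfl, by simp, by simpa using hx⟩

end

/-- Lemma 9 ("child exists"): in the canonical model, for any world `w` and any
formula `[U]B^T_X φ ∉ F(w)`, there exists a world `w'` such that `w ∼_{U∪X} w'`,
`T ⊆ 𝒯_{w'}`, and `[U]φ ∉ F(w')`. -/
theorem child_exists {V A : Type} (T₀ : Set V) (F₀ : Set (Formula V A))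
    (w : List (Triple V A)) (hw : IsWorld T₀ F₀ w)
    (U T X : Set V) (φ : Formula V A)
    (h : Formula.ann U (.bel T X φ) ∉ worldF F₀ w) :
    ∃ w' : List (Triple V A), IsWorld T₀ F₀ w' ∧
      (∀ x ∈ U ∪ X, csim x w w') ∧ T ⊆ worldT T₀ w' ∧
      Formula.ann U φ ∉ worldF F₀ w' := by
  have hbel : Formula.bel T (U ∪ X) (.ann U φ) ∉ worldF F₀ w := fun hmem =>
    h (hw.maxConsistent.mem_of_prv_imp (.mp (Prv.iff_mpr _ _) (.comm T X U φ)) hmem)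
  obtain ⟨F, hchild, hφ⟩ := exists_child hw hbel
  exact ⟨_, hchild, fun _ hx => csim_cons_self hx w, subset_rfl, hφ⟩
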